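/- For every real μ > 1/2 and every z > 0, s_{μ,μ+2}(z) = z^{μ} ∫₀¹ (1−t²)^{μ−1/2} (1 − 2(μ+1) t²) sin(zt) dt. -/

import Mathlib

open Real

/-- The Lommel function `s_{μ,ν}(z)`, defined for `z > 0` by its convergent series. -/
noncomputable def lommelS (μ ν z : ℝ) : ℝ :=
  ∑' k : ℕ, (-1 : ℝ) ^ k * z ^ (μ + 2 * (k : ℝ) + 1) /
    ∏ j ∈ Finset.range (k + 1), ((μ + 2 * (j : ℝ) + 1) ^ 2 - ν ^ 2)

/-!
Expand `sin (z t)` in its Taylor series and integrate termwise (dominated convergence).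
The `k`-th term involves the odd moments `I a n = ∫₀¹ t^(2n+1) (1 - t²)^a dt`, which satisfy
`(a + n + 2) I a (n+1) = (n + 1) I a n` by integration by parts. With `a = μ - 1/2` this recursion
gives `(∏_{j ≤ k} ((μ + 2j + 1)² - (μ + 2)²)) · (I a k - 2(μ + 1) I a (k+1)) = (2k + 1)!`, which
turns the termwise integral into the `k`-th term of the Lommel series.
-/

open Nat MeasureTheory Finset

theorem hasSum_integral_mul_sin {w : ℝ → ℝ} {a b : ℝ} (hw : IntervalIntegrable w volume a b)
    (z : ℝ) :
    HasSum (fun n : ℕ => (-1) ^ n * z ^ (2 * n + 1) / (2 * n + 1)! *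
        ∫ t in a..b, t ^ (2 * n + 1) * w t)
      (∫ t in a..b, w t * sin (z * t)) := by
  have hterm : ∀ n : ℕ, (∫ t in a..b, w t * ((-1) ^ n * (z * t) ^ (2 * n + 1) / (2 * n + 1)!)) =
      (-1) ^ n * z ^ (2 * n + 1) / (2 * n + 1)! * ∫ t in a..b, t ^ (2 * n + 1) * w t := by
    intro n
    rw [← intervalIntegral.integral_const_mul]
    congr 1 with t
    ring
  simp_rw [← hterm]
  refine intervalIntegral.hasSum_integral_of_dominated_convergence
    (fun n t => |w t| * (|z * t| ^ (2 * n + 1) / (2 * n + 1)!)) (fun n => ?_) (fun n => ?_)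
    (.of_forall fun t _ => ((hasSum_sinh |z * t|).mul_left |w t|).summable) ?_
    (.of_forall fun t _ => (hasSum_sin (z * t)).mul_left (w t))
  · exact (hw.mul_continuousOn (by fun_prop)).aestronglyMeasurable_restrict_uIoc
  · refine .of_forall fun t _ => ?_
    simp [abs_mul]
  · simp_rw [fun t => ((hasSum_sinh |z * t|).mul_left |w t|).tsum_eq]
    exact hw.norm.mul_continuousOn (by fun_prop)

noncomputable def oddMoment (a : ℝ) (n : ℕ) : ℝ :=
  ∫ t in (0 : ℝ)..1, t ^ (2 * n + 1) * (1 - t ^ 2) ^ a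

section OddMoment

variable {a : ℝ}

theorem continuous_one_sub_sq_rpow (ha : 0 ≤ a) : Continuous fun t : ℝ => (1 - t ^ 2) ^ a :=
  (continuous_const.sub (continuous_pow 2)).rpow_const fun _ => Or.inr ha

theorem intervalIntegrable_pow_mul_one_sub_sq_rpow (ha : 0 ≤ a) (n : ℕ) (b c : ℝ) :
    IntervalIntegrable (fun t : ℝ => t ^ n * (1 - t ^ 2) ^ a) volume b c :=
  ((continuous_pow n).mul (continuous_one_sub_sq_rpow ha)).intervalIntegrable b c

theorem hasDerivAt_one_sub_sq_rpow (ha : 0 ≤ a) (t : ℝ) :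
    HasDerivAt (fun t : ℝ => (1 - t ^ 2) ^ (a + 1)) (-(2 * (a + 1)) * (t * (1 - t ^ 2) ^ a)) t := by
  refine (((hasDerivAt_pow 2 t).const_sub 1).rpow_const (Or.inr (by linarith))).congr_deriv ?_
  rw [add_sub_cancel_right]
  push_cast
  ring

theorem oddMoment_zero (ha : 0 ≤ a) : 2 * (a + 1) * oddMoment a 0 = 1 := by
  have hderiv : ∀ t ∈ Set.uIcc (0 : ℝ) 1, HasDerivAt
      (fun t : ℝ => -(1 - t ^ 2) ^ (a + 1) / (2 * (a + 1))) (t ^ (2 * 0 + 1) * (1 - t ^ 2) ^ a) t :=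
    fun t _ => by
      refine ((hasDerivAt_one_sub_sq_rpow ha t).neg.div_const (2 * (a + 1))).congr_deriv ?_
      field_simp
      ring
  rw [oddMoment, intervalIntegral.integral_eq_sub_of_hasDerivAt hderiv
    (intervalIntegrable_pow_mul_one_sub_sq_rpow ha _ _ _)]
  norm_num [zero_rpow (by linarith : a + 1 ≠ 0)]
  field_simp

theorem oddMoment_sub_oddMoment_succ (ha : 0 ≤ a) (n : ℕ) :
    oddMoment a n - oddMoment a (n + 1) = oddMoment (a + 1) n := by
  rw [oddMoment, oddMoment, ← intervalIntegral.integral_sub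
    (intervalIntegrable_pow_mul_one_sub_sq_rpow ha _ _ _)
    (intervalIntegrable_pow_mul_one_sub_sq_rpow ha _ _ _)]
  refine intervalIntegral.integral_congr fun t ht => ?_
  rw [Set.uIcc_of_le zero_le_one] at ht
  have h : 0 ≤ 1 - t ^ 2 := by nlinarith [ht.1, ht.2]
  rw [rpow_add_one' h (by linarith)]
  ring

theorem oddMoment_add_one (ha : 0 ≤ a) (n : ℕ) :
    (n + 1) * oddMoment (a + 1) n = (a + 1) * oddMoment a (n + 1) := by
  have hderiv : ∀ t ∈ Set.uIcc (0 : ℝ) 1, HasDerivAt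
      (fun t : ℝ => t ^ (2 * n + 2) * (1 - t ^ 2) ^ (a + 1))
      ((2 * n + 2) * (t ^ (2 * n + 1) * (1 - t ^ 2) ^ (a + 1))
        - 2 * (a + 1) * (t ^ (2 * (n + 1) + 1) * (1 - t ^ 2) ^ a)) t :=
    fun t _ => by
      refine ((hasDerivAt_pow (2 * n + 2) t).mul (hasDerivAt_one_sub_sq_rpow ha t)).congr_deriv ?_
      rw [show 2 * n + 2 - 1 = 2 * n + 1 by omega]
      push_cast
      ring
  have h₁ := (intervalIntegrable_pow_mul_one_sub_sq_rpow (a := a + 1) (by linarith)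
    (2 * n + 1) 0 1).const_mul (2 * n + 2)
  have h₂ := (intervalIntegrable_pow_mul_one_sub_sq_rpow ha (2 * (n + 1) + 1) 0 1).const_mul
    (2 * (a + 1))
  have hftc := intervalIntegral.integral_eq_sub_of_hasDerivAt hderiv (h₁.sub h₂)
  rw [intervalIntegral.integral_sub h₁ h₂, intervalIntegral.integral_const_mul,
    intervalIntegral.integral_const_mul] at hftc
  norm_num [zero_rpow (by linarith : a + 1 ≠ 0)] at hftc
  rw [oddMoment, oddMoment]
  linear_combination hftc / 2

theorem oddMoment_succ (ha : 0 ≤ a) (n : ℕ) :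
    (a + n + 2) * oddMoment a (n + 1) = (n + 1) * oddMoment a n := by
  linear_combination -(n + 1) * oddMoment_sub_oddMoment_succ ha n - oddMoment_add_one ha n

end OddMoment

noncomputable def lommelMoment (μ : ℝ) (k : ℕ) : ℝ :=
  oddMoment (μ - 1 / 2) k - 2 * (μ + 1) * oddMoment (μ - 1 / 2) (k + 1)

section LommelMoment

variable {μ : ℝ}

theorem integral_pow_mul_lommelWeight (hμ : 1 / 2 ≤ μ) (k : ℕ) :
    ∫ t in (0 : ℝ)..1, t ^ (2 * k + 1) * ((1 - t ^ 2) ^ (μ - 1 / 2) * (1 - 2 * (μ + 1) * t ^ 2))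
      = lommelMoment μ k := by
  have ha : 0 ≤ μ - 1 / 2 := by linarith
  have hsplit :
      (fun t : ℝ => t ^ (2 * k + 1) * ((1 - t ^ 2) ^ (μ - 1 / 2) * (1 - 2 * (μ + 1) * t ^ 2)))
        = fun t => t ^ (2 * k + 1) * (1 - t ^ 2) ^ (μ - 1 / 2)
          - 2 * (μ + 1) * (t ^ (2 * (k + 1) + 1) * (1 - t ^ 2) ^ (μ - 1 / 2)) := by
    funext t
    ring
  rw [hsplit, intervalIntegral.integral_sub (intervalIntegrable_pow_mul_one_sub_sq_rpow ha _ _ _)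
    ((intervalIntegrable_pow_mul_one_sub_sq_rpow ha _ _ _).const_mul _),
    intervalIntegral.integral_const_mul, lommelMoment, oddMoment, oddMoment]

theorem lommelMoment_zero (hμ : 1 / 2 ≤ μ) :
    ((μ + 1) ^ 2 - (μ + 2) ^ 2) * lommelMoment μ 0 = 1 := by
  have ha : 0 ≤ μ - 1 / 2 := by linarith
  have h0 := oddMoment_zero ha
  have h1 := oddMoment_succ ha 0
  push_cast at h1
  rw [lommelMoment]
  linear_combination 4 * (μ + 1) * h1 + h0

theorem lommelMoment_succ (hμ : 1 / 2 ≤ μ) (k : ℕ) :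
    ((μ + 2 * ((k + 1 : ℕ) : ℝ) + 1) ^ 2 - (μ + 2) ^ 2) * lommelMoment μ (k + 1)
      = (2 * k + 3) * (2 * k + 2) * lommelMoment μ k := by
  have ha : 0 ≤ μ - 1 / 2 := by linarith
  have h0 := oddMoment_succ ha k
  have h1 := oddMoment_succ ha (k + 1)
  push_cast at h0 h1 ⊢
  rw [lommelMoment, lommelMoment]
  linear_combination -4 * (μ + 1) * (2 * k + 1) * h1 + 2 * (2 * k + 3) * h0

theorem prod_mul_lommelMoment (hμ : 1 / 2 ≤ μ) (k : ℕ) :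
    (∏ j ∈ range (k + 1), ((μ + 2 * (j : ℝ) + 1) ^ 2 - (μ + 2) ^ 2)) * lommelMoment μ k
      = (2 * k + 1)! := by
  induction k with
  | zero => simpa using lommelMoment_zero hμ
  | succ k ih =>
    rw [prod_range_succ, mul_assoc, lommelMoment_succ hμ,
      show 2 * (k + 1) + 1 = 2 * k + 1 + 1 + 1 by ring, factorial_succ, factorial_succ]
    push_cast
    linear_combination (2 * (k : ℝ) + 3) * (2 * k + 2) * ih

end LommelMoment

theorem stmt17 (μ : ℝ) (hμ : 1/2 < μ) (z : ℝ) (hz : 0 < z) :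
    lommelS μ (μ + 2) z = z ^ μ *
      ∫ t in (0:ℝ)..1,
        (1 - t ^ 2) ^ (μ - 1/2) * (1 - 2 * (μ + 1) * t ^ 2) * Real.sin (z * t) := by
  have hw : IntervalIntegrable (fun t : ℝ => (1 - t ^ 2) ^ (μ - 1 / 2) * (1 - 2 * (μ + 1) * t ^ 2))
      volume 0 1 :=
    ((continuous_one_sub_sq_rpow (by linarith)).mul (by fun_prop)).intervalIntegrable 0 1
  rw [← (hasSum_integral_mul_sin hw z).tsum_eq, ← tsum_mul_left, lommelS]
  refine tsum_congr fun k => ?_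
  have hP := prod_mul_lommelMoment hμ.le k
  have hP0 : ∏ j ∈ range (k + 1), ((μ + 2 * (j : ℝ) + 1) ^ 2 - (μ + 2) ^ 2) ≠ 0 :=
    left_ne_zero_of_mul (by rw [hP]; positivity)
  have hzpow : z ^ (μ + 2 * (k : ℝ) + 1) = z ^ μ * z ^ (2 * k + 1) := by
    rw [add_assoc, rpow_add hz]
    norm_cast
  rw [integral_pow_mul_lommelWeight hμ.le, hzpow, div_eq_iff hP0]
  field_simp
  linear_combination -hP
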